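/- Let c₁, …, c_m ∈ ℝ and let Q_c : ℝ^d → ℝ^d map each coordinate x_i to a nearest center: (Q_c(x))_i ∈ argmin_{j}|x_i − c_j|. For λ, η > 0 and y ∈ ℝ^d, consider the proximal problem min_{x ∈ ℝ^d} { (1/(2η))‖x − y‖² + (λ/2) min_{z: z_i ∈ {c₁,…,c_m}} ‖z − x‖₁ }. Then a minimizer x* is given coordinatewise by the soft-thresholding rule: x*_i = y_i − λη/2 if y_i ≥ (Q_c(y))_i + λη/2; x*_i = y_i + λη/2 if y_i ≤ (Q_c(y))_i − λη/2; and x*_i = (Q_c(y))_i otherwise. -/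

import Mathlib

open Finset

/-- The quantization penalty `min_{z : z_i ∈ {c₁,…,c_m}} ‖z − x‖₁`. -/
noncomputable def quantPenalty (d m : ℕ) (c : Fin m → ℝ) (x : Fin d → ℝ) : ℝ :=
  sInf {s | ∃ z : Fin d → ℝ, (∀ i, ∃ j, z i = c j) ∧ s = ∑ i, |z i - x i|}

/-- The proximal objective `(1/(2η))‖x − y‖² + (λ/2) min_{z ∈ C} ‖z − x‖₁`. -/
noncomputable def proxObj (d m : ℕ) (c : Fin m → ℝ) (η lam : ℝ)
    (y x : Fin d → ℝ) : ℝ :=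
  (1 / (2 * η)) * (∑ i, (x i - y i) ^ 2) + lam / 2 * quantPenalty d m c x

/-!
The penalty separates over coordinates and its inner minimum is attained at the nearest centers,
so the objective is a sum of one-dimensional problems `(t - y)² + 2κ |a - t|` with `κ = λη/2`.
For a fixed center `a` the minimum of this is `huber κ |y - a|`, attained by soft-thresholding `y`
towards `a`; since `huber κ` is monotone on `[0, ∞)`, the best center is the one nearest to `y`.
-/

section Quantization

variable {d m : ℕ} {c : Fin m → ℝ} {x : Fin d → ℝ}

theorem quantPenalty_le_sum_abs {z : Fin d → ℝ} (hz : ∀ i, ∃ j, z i = c j) :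
    quantPenalty d m c x ≤ ∑ i, |z i - x i| :=
  csInf_le ⟨0, by rintro s ⟨w, -, rfl⟩; positivity⟩ ⟨z, hz, rfl⟩

theorem quantPenalty_eq_sum_abs_nearest {q : Fin d → ℝ}
    (hq : ∀ i, (∃ j, q i = c j) ∧ ∀ j, |x i - q i| ≤ |x i - c j|) :
    quantPenalty d m c x = ∑ i, |q i - x i| := by
  refine le_antisymm (quantPenalty_le_sum_abs fun i => (hq i).1) ?_
  refine le_csInf ⟨_, q, fun i => (hq i).1, rfl⟩ ?_
  rintro s ⟨z, hz, rfl⟩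
  refine sum_le_sum fun i _ => ?_
  obtain ⟨j, hj⟩ := hz i
  simpa only [abs_sub_comm _ (x i), hj] using (hq i).2 j

end Quantization

section Scalar

variable {κ : ℝ}

/-- Twice the Huber loss: the value of `min_t (t - y)² + 2κ |a - t|` at `r = |y - a|`. -/
noncomputable def huber (κ r : ℝ) : ℝ :=
  if r ≤ κ then r ^ 2 else 2 * κ * r - κ ^ 2

noncomputable def softThreshold (q κ y : ℝ) : ℝ :=
  if q + κ ≤ y then y - κ else if y ≤ q - κ then y + κ else q

theorem huber_monotoneOn (hκ : 0 ≤ κ) : MonotoneOn (huber κ) (Set.Ici 0) := by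
  intro r (hr : 0 ≤ r) r' _ hrr'
  unfold huber
  split_ifs <;> nlinarith

theorem huber_abs_sub_le (hκ : 0 ≤ κ) (y a t : ℝ) :
    huber κ |y - a| ≤ (t - y) ^ 2 + 2 * κ * |a - t| := by
  have htri : |y - a| - |t - y| ≤ |a - t| := by
    have := abs_sub_le y t a
    rw [abs_sub_comm y t, abs_sub_comm t a] at this
    linarith
  have hsq : |t - y| ^ 2 = (t - y) ^ 2 := sq_abs _
  have hu := abs_nonneg (t - y)
  have hat := abs_nonneg (a - t)
  -- with `u = |t - y|` and `r = |y - a|`: `u² + 2κ(r - u) = (u - κ)² + 2κr - κ²`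
  unfold huber
  split_ifs with hr
  · rcases le_total |y - a| |t - y| with h | h
    · nlinarith [pow_le_pow_left₀ (abs_nonneg _) h 2]
    · nlinarith [sq_nonneg (|y - a| - |t - y|)]
  · nlinarith [sq_nonneg (|t - y| - κ)]

theorem sq_add_abs_softThreshold (hκ : 0 ≤ κ) (q y : ℝ) :
    (softThreshold q κ y - y) ^ 2 + 2 * κ * |q - softThreshold q κ y| = huber κ |y - q| := by
  unfold softThreshold
  split_ifs with hup hlow
  · rw [abs_of_nonpos (by linarith : q - (y - κ) ≤ 0), abs_of_nonneg (by linarith : 0 ≤ y - q)]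
    unfold huber
    split_ifs <;> nlinarith
  · rw [abs_of_nonneg (by linarith : 0 ≤ q - (y + κ)), abs_of_nonpos (by linarith : y - q ≤ 0)]
    unfold huber
    split_ifs <;> nlinarith
  · have hnear : |y - q| ≤ κ := abs_le.2 ⟨by linarith, by linarith⟩
    rw [huber, if_pos hnear, sub_self, abs_zero, sq_abs]
    ring

theorem sq_add_abs_softThreshold_le (hκ : 0 ≤ κ) {q a y : ℝ} (hq : |y - q| ≤ |y - a|) (t : ℝ) :
    (softThreshold q κ y - y) ^ 2 + 2 * κ * |q - softThreshold q κ y| ≤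
      (t - y) ^ 2 + 2 * κ * |a - t| :=
  calc _ = huber κ |y - q| := sq_add_abs_softThreshold hκ q y
    _ ≤ huber κ |y - a| := huber_monotoneOn hκ (Set.mem_Ici.2 (abs_nonneg _)) (Set.mem_Ici.2 (abs_nonneg _)) hq
    _ ≤ _ := huber_abs_sub_le hκ y a t

end Scalar

theorem prox_quant_soft_threshold_general (d m : ℕ) (c : Fin m → ℝ)
    (η lam : ℝ) (hη : 0 < η) (hlam : 0 < lam)
    (Qc : (Fin d → ℝ) → Fin d → ℝ)
    (hQc : ∀ x i, (∃ j, Qc x i = c j) ∧ ∀ j, |x i - Qc x i| ≤ |x i - c j|)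
    (y : Fin d → ℝ)
    (xstar : Fin d → ℝ)
    (hxstar : ∀ i, xstar i =
      if Qc y i + lam * η / 2 ≤ y i then y i - lam * η / 2
      else if y i ≤ Qc y i - lam * η / 2 then y i + lam * η / 2
      else Qc y i) :
    ∀ x : Fin d → ℝ, proxObj d m c η lam y xstar ≤ proxObj d m c η lam y x := by
  intro x
  set κ := lam * η / 2
  have hκ : 0 ≤ κ := by positivity
  have hsplit : ∀ u v : Fin d → ℝ, 1 / (2 * η) * ∑ i, (u i + 2 * κ * v i) =
      1 / (2 * η) * ∑ i, u i + lam / 2 * ∑ i, v i := by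
    intro u v
    rw [sum_add_distrib, ← mul_sum]
    field_simp
    ring
  have hcoord : ∀ i, (xstar i - y i) ^ 2 + 2 * κ * |Qc y i - xstar i| ≤
      (x i - y i) ^ 2 + 2 * κ * |Qc x i - x i| := by
    intro i
    obtain ⟨j, hj⟩ := (hQc x i).1
    rw [show xstar i = softThreshold (Qc y i) κ (y i) from hxstar i]
    exact sq_add_abs_softThreshold_le hκ (hj ▸ (hQc y i).2 j) (x i)
  calc proxObj d m c η lam y xstar
      ≤ 1 / (2 * η) * ∑ i, (xstar i - y i) ^ 2 + lam / 2 * ∑ i, |Qc y i - xstar i| := by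
        unfold proxObj
        gcongr
        exact quantPenalty_le_sum_abs fun i => (hQc y i).1
    _ = 1 / (2 * η) * ∑ i, ((xstar i - y i) ^ 2 + 2 * κ * |Qc y i - xstar i|) :=
        (hsplit _ _).symm
    _ ≤ 1 / (2 * η) * ∑ i, ((x i - y i) ^ 2 + 2 * κ * |Qc x i - x i|) :=
        mul_le_mul_of_nonneg_left (sum_le_sum fun i _ => hcoord i) (by positivity)
    _ = proxObj d m c η lam y x := by
        rw [hsplit, proxObj, quantPenalty_eq_sum_abs_nearest (hQc x)]

/-- The coordinatewise soft-thresholding rule toward the nearest center `Qc y`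
solves the proximal quantization problem. -/
theorem prox_quant_soft_threshold (d m : ℕ) (hm : 0 < m) (c : Fin m → ℝ)
    (η lam : ℝ) (hη : 0 < η) (hlam : 0 < lam)
    (Qc : (Fin d → ℝ) → Fin d → ℝ)
    (hQc : ∀ x i, (∃ j, Qc x i = c j) ∧ ∀ j, |x i - Qc x i| ≤ |x i - c j|)
    (y : Fin d → ℝ)
    (xstar : Fin d → ℝ)
    (hxstar : ∀ i, xstar i =
      if Qc y i + lam * η / 2 ≤ y i then y i - lam * η / 2
      else if y i ≤ Qc y i - lam * η / 2 then y i + lam * η / 2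
      else Qc y i) :
    ∀ x : Fin d → ℝ, proxObj d m c η lam y xstar ≤ proxObj d m c η lam y x :=
  prox_quant_soft_threshold_general d m c η lam hη hlam Qc hQc y xstar hxstar
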